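/- arXiv:2210.02720 — 4 statements merged into one kernel-verified Lean document; each statement's English description precedes it below -/
import Mathlib

section
/- Consider the flooding update θ_{t+1} = θ_t - η·sign(L(θ_t) - b)·∇L(θ_t). If L(θ_t) < b and L(θ_{t+1}) > b, then the two-step update satisfies θ_{t+2} = θ_t - η²·(∇L(θ_t + η∇L(θ_t)) - ∇L(θ_t))/η, i.e., it equals a forward finite-difference gradient-regularization step with ε = γ = η. -/
/-!
Below the flood level the step is gradient ascent, θ₁ = θ₀ + η ∇L(θ₀); once above it, the next step
is gradient descent, θ₂ = θ₁ - η ∇L(θ₁). Substituting θ₁, the two steps sum to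
θ₀ - η (∇L(θ₀ + η ∇L(θ₀)) - ∇L(θ₀)), which is η² times the forward difference quotient with step η.
-/

section Flooding

variable {F : Type*} [NormedAddCommGroup F] [InnerProductSpace ℝ F] [CompleteSpace F]

noncomputable def floodingStep (L : F → ℝ) (b η : ℝ) (θ : F) : F :=
  θ - (η * Real.sign (L θ - b)) • gradient L θ

theorem floodingStep_of_lt {L : F → ℝ} {b : ℝ} (η : ℝ) {θ : F} (h : L θ < b) :
    floodingStep L b η θ = θ + η • gradient L θ := by
  rw [floodingStep, Real.sign_of_neg (sub_neg.mpr h), mul_neg_one, neg_smul, sub_neg_eq_add]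

theorem floodingStep_of_gt {L : F → ℝ} {b : ℝ} (η : ℝ) {θ : F} (h : b < L θ) :
    floodingStep L b η θ = θ - η • gradient L θ := by
  rw [floodingStep, Real.sign_of_pos (sub_pos.mpr h), mul_one]

end Flooding

theorem add_smul_sub_smul_eq_sub_sq_smul_diffQuot {E : Type*} [AddCommGroup E] [Module ℝ E]
    {η : ℝ} (hη : η ≠ 0) (θ g₀ g₁ : E) :
    θ + η • g₀ - η • g₁ = θ - η ^ 2 • (η⁻¹ • (g₁ - g₀)) := by
  rw [smul_smul, sq, mul_assoc, mul_inv_cancel₀ hη, mul_one, smul_sub]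
  abel

theorem flooding_forward_fd_general (d : ℕ)
    (L : EuclideanSpace ℝ (Fin d) → ℝ)
    (b η : ℝ) (hη : 0 < η)
    (θ0 θ1 θ2 : EuclideanSpace ℝ (Fin d))
    (h1 : θ1 = θ0 - (η * Real.sign (L θ0 - b)) • gradient L θ0)
    (h2 : θ2 = θ1 - (η * Real.sign (L θ1 - b)) • gradient L θ1)
    (hlow : L θ0 < b) (hhigh : b < L θ1) :
    θ2 = θ0 - (η ^ 2) •
      (η⁻¹ • (gradient L (θ0 + η • gradient L θ0) - gradient L θ0)) := by
  have ascent : θ1 = θ0 + η • gradient L θ0 := h1.trans (floodingStep_of_lt η hlow)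
  have descent : θ2 = θ1 - η • gradient L θ1 := h2.trans (floodingStep_of_gt η hhigh)
  rw [descent, ascent]
  exact add_smul_sub_smul_eq_sub_sq_smul_diffQuot hη.ne' _ _ _

/-- Flooding update θ_{t+1} = θ_t - η·sign(L(θ_t) - b)·∇L(θ_t). If L(θ_t) < b and
L(θ_{t+1}) > b, the two-step update equals a forward finite-difference GR step with
ε = γ = η: θ_{t+2} = θ_t - η²·(∇L(θ_t + η∇L(θ_t)) - ∇L(θ_t))/η. -/
theorem flooding_forward_fd (d : ℕ)
    (L : EuclideanSpace ℝ (Fin d) → ℝ) (hL : Differentiable ℝ L)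
    (b η : ℝ) (hb : 0 < b) (hη : 0 < η)
    (θ0 θ1 θ2 : EuclideanSpace ℝ (Fin d))
    (h1 : θ1 = θ0 - (η * Real.sign (L θ0 - b)) • gradient L θ0)
    (h2 : θ2 = θ1 - (η * Real.sign (L θ1 - b)) • gradient L θ1)
    (hlow : L θ0 < b) (hhigh : b < L θ1) :
    θ2 = θ0 - (η ^ 2) •
      (η⁻¹ • (gradient L (θ0 + η • gradient L θ0) - gradient L θ0)) :=
  flooding_forward_fd_general d L b η hη θ0 θ1 θ2 h1 h2 hlow hhigh
end

section
/- Consider the flooding update θ_{t+1} = θ_t - η·sign(L(θ_t) - b)·∇L(θ_t). If L(θ_t) > b and L(θ_{t+1}) < b, then θ_{t+2} = θ_t - η²·(∇L(θ_t) - ∇L(θ_t - η∇L(θ_t)))/η, i.e., the two-step flooding update equals a backward finite-difference gradient-regularization step. -/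
theorem sub_smul_add_smul_eq_sub_sq_smul_inv_smul {𝕜 E : Type*} [Field 𝕜] [AddCommGroup E]
    [Module 𝕜 E] {η : 𝕜} (hη : η ≠ 0) (x g g' : E) :
    x - η • g + η • g' = x - η ^ 2 • η⁻¹ • (g - g') := by
  rw [smul_smul, sq, mul_assoc, mul_inv_cancel₀ hη, mul_one, smul_sub]
  abel

theorem flooding_backward_fd_general (d : ℕ)
    (L : EuclideanSpace ℝ (Fin d) → ℝ)
    (b η : ℝ) (hη : 0 < η)
    (θ0 θ1 θ2 : EuclideanSpace ℝ (Fin d))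
    (h1 : θ1 = θ0 - (η * Real.sign (L θ0 - b)) • gradient L θ0)
    (h2 : θ2 = θ1 - (η * Real.sign (L θ1 - b)) • gradient L θ1)
    (hhigh : b < L θ0) (hlow : L θ1 < b) :
    θ2 = θ0 - (η ^ 2) •
      (η⁻¹ • (gradient L θ0 - gradient L (θ0 - η • gradient L θ0))) := by
  have descent : θ1 = θ0 - η • gradient L θ0 := by
    rw [h1, Real.sign_of_pos (sub_pos.2 hhigh), mul_one]
  have ascent : θ2 = θ1 + η • gradient L θ1 := by
    rw [h2, Real.sign_of_neg (sub_neg.2 hlow), mul_neg_one, neg_smul, sub_neg_eq_add]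
  rw [ascent, descent]
  exact sub_smul_add_smul_eq_sub_sq_smul_inv_smul hη.ne' _ _ _

/-- Flooding update θ_{t+1} = θ_t - η·sign(L(θ_t) - b)·∇L(θ_t). If L(θ_t) > b and
L(θ_{t+1}) < b, the two-step update equals a backward finite-difference GR step:
θ_{t+2} = θ_t - η²·(∇L(θ_t) - ∇L(θ_t - η∇L(θ_t)))/η. -/
theorem flooding_backward_fd (d : ℕ)
    (L : EuclideanSpace ℝ (Fin d) → ℝ) (hL : Differentiable ℝ L)
    (b η : ℝ) (hb : 0 < b) (hη : 0 < η)
    (θ0 θ1 θ2 : EuclideanSpace ℝ (Fin d))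
    (h1 : θ1 = θ0 - (η * Real.sign (L θ0 - b)) • gradient L θ0)
    (h2 : θ2 = θ1 - (η * Real.sign (L θ1 - b)) • gradient L θ1)
    (hhigh : b < L θ0) (hlow : L θ1 < b) :
    θ2 = θ0 - (η ^ 2) •
      (η⁻¹ • (gradient L θ0 - gradient L (θ0 - η • gradient L θ0))) :=
  flooding_backward_fd_general d L b η hη θ0 θ1 θ2 h1 h2 hhigh hlow
end

section
/- Suppose w : ℝ≥0 → ℝᵈ satisfies the coordinate-wise linear ODE dw/dt = -(1/n)g(t) ∘ w(t) - (1/n)h(t) for given continuous vector functions g, h, where h(t) = (1/n)g*(t) ∘ w*(t) with w*(t) = w(t) + ε∇L(w(t)). Then in the diagonal linear network with GR flow dw/dt = -q₁∇L(w) - q₂∇L(w + ε∇L(w)), the solution has the closed form w(t) = α₀ ∘ exp(-(1/n)X̃ᵀ∫₀ᵗ(q₁r(s) + q₂r*(s))ds) ∘ exp(-(q₂ε/n²)∫₀ᵗ(X̃ᵀr*(s)) ∘ (X̃ᵀr(s))ds). -/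
/-!
Substituting `w* = w + (ε/n)(X̃ᵀr) ∘ w` into the second gradient term shows that each
coordinate of the flow obeys a scalar linear ODE `ẇᵢ = -cᵢ(t) wᵢ` with
`cᵢ = (1/n)(q₁(X̃ᵀr)ᵢ + q₂(X̃ᵀr*)ᵢ) + (q₂ε/n²)(X̃ᵀr*)ᵢ(X̃ᵀr)ᵢ`, a continuous coefficient
because `w` is differentiable. The integrating factor `exp ∫₀ᵗ cᵢ` solves it, and splitting the
integral of `cᵢ` into its two parts gives the two exponential factors.
-/

open Matrix MeasureTheory

theorem eq_mul_exp_neg_integral_of_hasDerivAt {f c : ℝ → ℝ} (hc : Continuous c)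
    (hf : ∀ t, HasDerivAt f (-(c t) * f t) t) (t : ℝ) :
    f t = f 0 * Real.exp (-∫ s in (0:ℝ)..t, c s) := by
  set C : ℝ → ℝ := fun t => ∫ s in (0:ℝ)..t, c s
  have hC : ∀ t, HasDerivAt C (c t) t := fun t =>
    (hc.integral_hasStrictDerivAt 0 t).hasDerivAt
  have hderiv : ∀ t, HasDerivAt (fun t => f t * Real.exp (C t)) 0 t := fun t =>
    ((hf t).mul (hC t).exp).congr_deriv (by ring)
  have hconst : f t * Real.exp (C t) = f 0 :=
    (is_const_of_deriv_eq_zero (fun x => (hderiv x).differentiableAt)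
      (fun x => (hderiv x).deriv) t 0).trans (by simp [C])
  rw [← hconst, mul_assoc, ← Real.exp_add, add_neg_cancel, Real.exp_zero, mul_one]

theorem eq_mul_exp_mul_exp_of_hasDerivAt {f u v : ℝ → ℝ} {a b : ℝ}
    (hu : Continuous u) (hv : Continuous v)
    (hf : ∀ t, HasDerivAt f (-(a * u t + b * v t) * f t) t) (t : ℝ) :
    f t = f 0 * Real.exp (-a * ∫ s in (0:ℝ)..t, u s)
      * Real.exp (-b * ∫ s in (0:ℝ)..t, v s) := by
  have hsplit : ∫ s in (0:ℝ)..t, (a * u s + b * v s)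
      = a * (∫ s in (0:ℝ)..t, u s) + b * ∫ s in (0:ℝ)..t, v s := by
    rw [intervalIntegral.integral_add
        ((by fun_prop : Continuous fun s => a * u s).intervalIntegrable 0 t)
        ((by fun_prop : Continuous fun s => b * v s).intervalIntegrable 0 t),
      intervalIntegral.integral_const_mul, intervalIntegral.integral_const_mul]
  rw [eq_mul_exp_neg_integral_of_hasDerivAt (by fun_prop) hf t, hsplit, neg_add, Real.exp_add,
    mul_assoc, neg_mul, neg_mul]

theorem dln_gr_flow_closed_form_general (n m : ℕ)
    (Xt : Matrix (Fin n) (Fin m) ℝ) (y : Fin n → ℝ)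
    (w wstar : ℝ → Fin m → ℝ) (r rstar : ℝ → Fin n → ℝ)
    (α0 : Fin m → ℝ) (ε q1 q2 : ℝ)
    (hr : ∀ t, r t = Xt *ᵥ (fun i => (w t i) ^ 2) - y)
    (hwstar : ∀ t, ∀ i, wstar t i
      = w t i + (ε / (n:ℝ)) * (Xtᵀ *ᵥ r t) i * w t i)
    (hrstar : ∀ t, rstar t = Xt *ᵥ (fun i => (wstar t i) ^ 2) - y)
    (hflow : ∀ t, ∀ i, HasDerivAt (fun s => w s i)
      (-(q1 / (n:ℝ)) * (Xtᵀ *ᵥ r t) i * w t i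
        - (q2 / (n:ℝ)) * (Xtᵀ *ᵥ rstar t) i * wstar t i) t)
    (hinit : w 0 = α0) :
    ∀ t ≥ (0:ℝ), ∀ i, w t i = α0 i
      * Real.exp (-(1 / (n:ℝ)) *
          ∫ s in (0:ℝ)..t, (q1 * (Xtᵀ *ᵥ r s) i + q2 * (Xtᵀ *ᵥ rstar s) i))
      * Real.exp (-(q2 * ε / (n:ℝ) ^ 2) *
          ∫ s in (0:ℝ)..t, (Xtᵀ *ᵥ rstar s) i * (Xtᵀ *ᵥ r s) i) := by
  intro t _ i
  have hw : Continuous w :=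
    continuous_pi fun j => continuous_iff_continuousAt.2 fun s => (hflow s j).continuousAt
  have hgrad : Continuous fun s => Xtᵀ *ᵥ r s := by
    rw [funext hr]
    fun_prop
  have hwstar_cont : Continuous wstar := by
    rw [funext fun s => funext (hwstar s)]
    exact continuous_pi fun j => by fun_prop
  have hgrad_star : Continuous fun s => Xtᵀ *ᵥ rstar s := by
    rw [funext hrstar]
    fun_prop
  have hode : ∀ s, HasDerivAt (fun u => w u i)
      (-(1 / (n:ℝ) * (q1 * (Xtᵀ *ᵥ r s) i + q2 * (Xtᵀ *ᵥ rstar s) i)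
        + q2 * ε / (n:ℝ) ^ 2 * ((Xtᵀ *ᵥ rstar s) i * (Xtᵀ *ᵥ r s) i)) * w s i) s := by
    intro s
    convert hflow s i using 1
    rw [hwstar s i]
    ring
  rw [eq_mul_exp_mul_exp_of_hasDerivAt (by fun_prop) (by fun_prop) hode t, hinit]

/-- Closed-form solution of the diagonal-linear-network flow with
finite-difference GR, dw/dt = -q₁∇L(w) - q₂∇L(w + ε∇L(w)) with q₁ = 1 - γ/ε,
q₂ = γ/ε, stacked data matrix X̃, residuals r = X̃w² - y, r* = X̃(w*)² - y,
w* = w + ε∇L(w) where ∇L(w) = (1/n)(X̃ᵀr) ∘ w. Then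
w(t) = α₀ ∘ exp(-(1/n)X̃ᵀ∫₀ᵗ(q₁r + q₂r*)) ∘ exp(-(q₂ε/n²)∫₀ᵗ(X̃ᵀr*) ∘ (X̃ᵀr)). -/
theorem dln_gr_flow_closed_form (n m : ℕ) (hn : 0 < n)
    (Xt : Matrix (Fin n) (Fin m) ℝ) (y : Fin n → ℝ)
    (w wstar : ℝ → Fin m → ℝ) (r rstar : ℝ → Fin n → ℝ)
    (α0 : Fin m → ℝ) (ε γ q1 q2 : ℝ) (hε : ε ≠ 0)
    (hq1 : q1 = 1 - γ / ε) (hq2 : q2 = γ / ε)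
    (hr : ∀ t, r t = Xt *ᵥ (fun i => (w t i) ^ 2) - y)
    (hwstar : ∀ t, ∀ i, wstar t i
      = w t i + (ε / (n:ℝ)) * (Xtᵀ *ᵥ r t) i * w t i)
    (hrstar : ∀ t, rstar t = Xt *ᵥ (fun i => (wstar t i) ^ 2) - y)
    (hflow : ∀ t, ∀ i, HasDerivAt (fun s => w s i)
      (-(q1 / (n:ℝ)) * (Xtᵀ *ᵥ r t) i * w t i
        - (q2 / (n:ℝ)) * (Xtᵀ *ᵥ rstar t) i * wstar t i) t)
    (hinit : w 0 = α0) :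
    ∀ t ≥ (0:ℝ), ∀ i, w t i = α0 i
      * Real.exp (-(1 / (n:ℝ)) *
          ∫ s in (0:ℝ)..t, (q1 * (Xtᵀ *ᵥ r s) i + q2 * (Xtᵀ *ᵥ rstar s) i))
      * Real.exp (-(q2 * ε / (n:ℝ) ^ 2) *
          ∫ s in (0:ℝ)..t, (Xtᵀ *ᵥ rstar s) i * (Xtᵀ *ᵥ r s) i) :=
  dln_gr_flow_closed_form_general n m Xt y w wstar r rstar α0 ε q1 q2 hr hwstar hrstar hflow hinit
end

section
/- Let β_∞ = 2α² ∘ sinh(Xᵀν) for some ν ∈ ℝⁿ and α ∈ ℝᵈ with positive entries, and suppose Xβ_∞ = y. Then β_∞ is the unique minimizer of φ_α(β) = ∑ᵢ αᵢ² q(βᵢ/αᵢ²) over {β : Xβ = y}, where q(z) = 2 - √(4+z²) + z·arcsinh(z/2). -/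
/-!
The potential `q` is strictly convex with `q' z = arsinh (z / 2)`, so each summand
`b ↦ αᵢ² q (b / αᵢ²)` lies strictly above its tangent line at `β∞ᵢ` except at `β∞ᵢ` itself. The
choice `β∞ = 2α² ∘ sinh (Xᵀν)` makes the slopes of these tangents the entries of `Xᵀν`, so for an
interpolant `β` the linear terms add up to `ν ⬝ X (β - β∞) = 0`.
-/

open Matrix Real Set

noncomputable def dlnPotential (z : ℝ) : ℝ := 2 - √(4 + z ^ 2) + z * arsinh (z / 2)

lemma hasDerivAt_dlnPotential (z : ℝ) : HasDerivAt dlnPotential (arsinh (z / 2)) z := by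
  have hpos : 0 < 4 + z ^ 2 := by positivity
  have hsqrt : HasDerivAt (fun z : ℝ => √(4 + z ^ 2)) (2 * z / (2 * √(4 + z ^ 2))) z :=
    ((hasDerivAt_pow 2 z).const_add 4).sqrt hpos.ne' |>.congr_deriv (by simp)
  have harsinh : HasDerivAt (fun z : ℝ => arsinh (z / 2)) ((√(1 + (z / 2) ^ 2))⁻¹ • (1 / 2)) z :=
    ((hasDerivAt_id z).div_const 2).arsinh
  have hhalf : √(1 + (z / 2) ^ 2) = √(4 + z ^ 2) / 2 := by
    rw [show 1 + (z / 2) ^ 2 = (4 + z ^ 2) / 2 ^ 2 by ring, sqrt_div' _ (by positivity),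
      sqrt_sq two_pos.le]
  refine (((hasDerivAt_const z 2).sub hsqrt).add ((hasDerivAt_id z).mul harsinh)).congr_deriv ?_
  have hsqrt_ne : √(4 + z ^ 2) ≠ 0 := by positivity
  rw [hhalf, id, smul_eq_mul]
  field_simp
  ring

lemma strictConvexOn_dlnPotential : StrictConvexOn ℝ univ dlnPotential := by
  refine StrictMono.strictConvexOn_univ_of_deriv
    (continuous_iff_continuousAt.2 fun z => (hasDerivAt_dlnPotential z).continuousAt) ?_
  intro x y hxy
  rw [(hasDerivAt_dlnPotential x).deriv, (hasDerivAt_dlnPotential y).deriv]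
  exact arsinh_strictMono (by linarith)

lemma StrictConvexOn.add_mul_sub_lt {S : Set ℝ} {f : ℝ → ℝ} {x y f' : ℝ}
    (hfc : StrictConvexOn ℝ S f) (hx : x ∈ S) (hy : y ∈ S) (hxy : x ≠ y)
    (hf' : HasDerivAt f f' x) : f x + f' * (y - x) < f y := by
  rcases hxy.lt_or_gt with hlt | hgt
  · have h := hfc.lt_slope_of_hasDerivAt hx hy hlt hf'
    rw [slope_def_field, lt_div_iff₀ (sub_pos.2 hlt)] at h
    linarith
  · have h := hfc.slope_lt_of_hasDerivAt hy hx hgt hf'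
    rw [slope_def_field, div_lt_iff₀ (sub_pos.2 hgt)] at h
    linarith

lemma mul_dlnPotential_div_add_mul_sub_lt {a x y : ℝ} (ha : 0 < a) (hxy : x ≠ y) :
    a * dlnPotential (x / a) + arsinh (x / a / 2) * (y - x) < a * dlnPotential (y / a) := by
  have h := strictConvexOn_dlnPotential.add_mul_sub_lt (mem_univ _) (mem_univ _)
    (fun h => hxy ((div_left_inj' ha.ne').1 h)) (hasDerivAt_dlnPotential (x / a))
  calc a * dlnPotential (x / a) + arsinh (x / a / 2) * (y - x)
      = a * (dlnPotential (x / a) + arsinh (x / a / 2) * (y / a - x / a)) := by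
        field_simp
    _ < a * dlnPotential (y / a) := mul_lt_mul_of_pos_left h ha

theorem Finset.sum_lt_sum_of_tangent_lt {ι : Type*} [Fintype ι] (f : ι → ℝ → ℝ) (g a b : ι → ℝ)
    (hf : ∀ i, a i ≠ b i → f i (a i) + g i * (b i - a i) < f i (b i))
    (hg : g ⬝ᵥ (b - a) = 0) (hab : a ≠ b) : ∑ i, f i (a i) < ∑ i, f i (b i) := by
  obtain ⟨j, hj⟩ := Function.ne_iff.1 hab
  have hle : ∀ i ∈ univ, f i (a i) + g i * (b i - a i) ≤ f i (b i) := by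
    intro i _
    by_cases hi : a i = b i
    · simp [hi]
    · exact (hf i hi).le
  have hsum := Finset.sum_lt_sum hle ⟨j, mem_univ j, hf j hj⟩
  have hdot : g ⬝ᵥ (b - a) = ∑ i, g i * (b i - a i) := rfl
  rwa [sum_add_distrib, ← hdot, hg, add_zero] at hsum

/-- If β∞ = 2α² ∘ sinh(Xᵀν) for some ν ∈ ℝⁿ, α has positive entries, and
Xβ∞ = y, then β∞ is the unique minimizer of φ_α(β) = ∑ᵢ αᵢ² q(βᵢ/αᵢ²) over
{β : Xβ = y}, where q(z) = 2 - √(4+z²) + z·arcsinh(z/2). -/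
theorem dln_interpolation_minimizer (n d : ℕ)
    (X : Matrix (Fin n) (Fin d) ℝ) (y : Fin n → ℝ)
    (α : Fin d → ℝ) (hα : ∀ i, 0 < α i) (ν : Fin n → ℝ)
    (βinf : Fin d → ℝ)
    (hβ : βinf = fun i => 2 * (α i) ^ 2 * Real.sinh ((Xᵀ *ᵥ ν) i))
    (hinterp : X *ᵥ βinf = y) :
    ∀ β : Fin d → ℝ, X *ᵥ β = y → β ≠ βinf →
      (∑ i, (α i) ^ 2 * (2 - Real.sqrt (4 + (βinf i / (α i) ^ 2) ^ 2)
          + (βinf i / (α i) ^ 2) * Real.arsinh (βinf i / (α i) ^ 2 / 2)))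
      < ∑ i, (α i) ^ 2 * (2 - Real.sqrt (4 + (β i / (α i) ^ 2) ^ 2)
          + (β i / (α i) ^ 2) * Real.arsinh (β i / (α i) ^ 2 / 2)) := by
  intro β hXβ hne
  have hgrad : ∀ i, arsinh (βinf i / α i ^ 2 / 2) = (Xᵀ *ᵥ ν) i := fun i => by
    have hαi : α i ^ 2 ≠ 0 := (pow_pos (hα i) 2).ne'
    rw [congrFun hβ i, mul_right_comm, mul_div_cancel_right₀ _ hαi,
      mul_div_cancel_left₀ _ two_ne_zero, arsinh_sinh]
  refine Finset.sum_lt_sum_of_tangent_lt (fun i b => α i ^ 2 * dlnPotential (b / α i ^ 2))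
    (Xᵀ *ᵥ ν) βinf β (fun i hi => ?_) ?_ hne.symm
  · rw [← hgrad i]
    exact mul_dlnPotential_div_add_mul_sub_lt (pow_pos (hα i) 2) hi
  · rw [mulVec_transpose, ← dotProduct_mulVec, mulVec_sub, hXβ, hinterp, sub_self, dotProduct_zero]
end
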